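/- arXiv:1909.13145 — 8 statements merged into one kernel-verified Lean document; each statement's English description precedes it below -/
import Mathlib

section
/- Let m be a positive integer and J ⊆ {0,1,…,m−1}. If C_m(J) does not divide |J|, then there is no K ⊆ {0,1,…,m−1} with |K| = |J| such that H_{J,K,m} is a Hadamard submatrix of the Fourier matrix F_m. -/
open Finset

/-- The difference set `D(X) = {x₁ - x₂ : x₁, x₂ ∈ X}` of a finite set of naturals. -/
def diffSet (X : Finset ℕ) : Finset ℤ :=
  (X ×ˢ X).image fun q => (q.1 : ℤ) - (q.2 : ℤ)

/-- The `m`-th primitive set `P_m(X) = {m / gcd(m,d) : d ∈ D(X)}`. -/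
def primSet (m : ℕ) (X : Finset ℕ) : Finset ℕ :=
  (diffSet X).image fun d => m / Nat.gcd m d.natAbs

/-- `H_{J,K,m}` is a Hadamard submatrix of the Fourier matrix `F_m`:
for all distinct `j₁ j₂ ∈ J`, `∑_{k ∈ K} e^{2πi(j₁-j₂)k/m} = 0`. -/
def IsHadamardSub (m : ℕ) (J K : Finset ℕ) : Prop :=
  ∀ j₁ ∈ J, ∀ j₂ ∈ J, j₁ ≠ j₂ →
    ∑ k ∈ K, Complex.exp (2 * Real.pi * Complex.I * ((j₁ : ℂ) - (j₂ : ℂ)) * (k : ℂ) / (m : ℂ)) = 0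

/-- `ν_p^max` of a finite set of naturals. -/
noncomputable def nuMaxN (p : ℕ) (S : Finset ℕ) : ℕ := S.sup fun n => padicValNat p n

/-- `ν_p^min` of a finite set of naturals (0 for the empty set). -/
noncomputable def nuMinN (p : ℕ) (S : Finset ℕ) : ℕ :=
  if h : S.Nonempty then S.inf' h fun n => padicValNat p n else 0

/-- `ν_p^max` of a finite set of integers. -/
noncomputable def nuMaxI (p : ℕ) (S : Finset ℤ) : ℕ := S.sup fun d => padicValInt p d

/-- `ν_p^min` of a finite set of integers (0 for the empty set). -/
noncomputable def nuMinI (p : ℕ) (S : Finset ℤ) : ℕ :=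
  if h : S.Nonempty then S.inf' h fun d => padicValInt p d else 0

/-- `C_m(X) = ∏_{s ∈ P_m(X) \ {1}} Φ_s(1)`. -/
noncomputable def Cm (m : ℕ) (X : Finset ℕ) : ℤ :=
  ∏ s ∈ (primSet m X).erase 1, (Polynomial.cyclotomic s ℤ).eval 1

theorem not_hadamard_of_Cm_not_dvd (m : ℕ) (hm : 0 < m) (J : Finset ℕ)
    (hJ : J ⊆ Finset.range m) (hC : ¬ (Cm m J ∣ (J.card : ℤ))) :
    ∀ K : Finset ℕ, K ⊆ Finset.range m → K.card = J.card → ¬ IsHadamardSub m J K := by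
  classical
  intro K hK hcard hHad
  apply hC
  set Q : Polynomial ℤ := ∑ k ∈ K, Polynomial.X ^ k with hQdef
  have hQeval : Q.eval 1 = (J.card : ℤ) := by
    simp [hQdef, Polynomial.eval_finset_sum, hcard]
  -- Key: each relevant cyclotomic polynomial divides Q over ℚ
  have key : ∀ s ∈ (primSet m J).erase 1,
      Polynomial.cyclotomic s ℚ ∣ Q.map (algebraMap ℤ ℚ) := by
    intro s hs
    obtain ⟨hs1, hsP⟩ := Finset.mem_erase.mp hs
    obtain ⟨d, hd, hds⟩ := Finset.mem_image.mp hsP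
    obtain ⟨q, hq, hqd⟩ := Finset.mem_image.mp hd
    obtain ⟨hq1, hq2⟩ := Finset.mem_product.mp hq
    set e : ℕ := d.natAbs with he
    -- find a > b in J with a - b = e
    have hab : ∃ a ∈ J, ∃ b ∈ J, b < a ∧ a - b = e := by
      rcases lt_trichotomy q.1 q.2 with h | h | h
      · exact ⟨q.2, hq2, q.1, hq1, h, by omega⟩
      · exfalso
        apply hs1
        have h0 : e = 0 := by omega
        rw [← hds, h0]
        simp [Nat.div_self hm]
      · exact ⟨q.1, hq1, q.2, hq2, h, by omega⟩
    obtain ⟨a, ha, b, hb, hba, habe⟩ := hab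
    have he0 : 0 < e := by omega
    set ζ : ℂ := Complex.exp (2 * Real.pi * Complex.I / m) with hζdef
    have hζ : IsPrimitiveRoot ζ m := Complex.isPrimitiveRoot_exp m hm.ne'
    set μ : ℂ := ζ ^ e with hμdef
    set g : ℕ := Nat.gcd m e with hg
    have hg0 : 0 < g := Nat.gcd_pos_of_pos_left e hm
    have hse : s = m / g := by rw [← hds]
    have hms : m = g * s := by
      rw [hse]
      exact (Nat.mul_div_cancel' (Nat.gcd_dvd_left m e)).symm
    have hs0 : 0 < s := by
      rcases Nat.eq_zero_or_pos s with h0 | h0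
      · rw [h0, mul_zero] at hms; omega
      · exact h0
    -- μ is a primitive s-th root of unity
    have h1 : IsPrimitiveRoot (ζ ^ g) s := hζ.pow hm hms
    have hμeq : μ = (ζ ^ g) ^ (e / g) := by
      rw [hμdef, ← pow_mul, Nat.mul_div_cancel' (Nat.gcd_dvd_right m e)]
    have hcop : (e / g).Coprime s := by
      rw [hse]
      exact (Nat.coprime_div_gcd_div_gcd hg0).symm
    have hμs : IsPrimitiveRoot μ s := by
      rw [hμeq]
      exact h1.pow_of_coprime _ hcop
    -- the Hadamard condition gives a vanishing sum of powers of μ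
    have hsum : ∑ k ∈ K, μ ^ k = 0 := by
      have h0 := hHad a ha b hb (by omega)
      rw [← h0]
      refine Finset.sum_congr rfl fun k _ => ?_
      have hab' : ((a : ℂ) - (b : ℂ)) = (e : ℂ) := by
        rw [← habe]
        push_cast [Nat.cast_sub hba.le]
        ring
      rw [hab', hμdef, hζdef, ← pow_mul, ← Complex.exp_nat_mul]
      congr 1
      push_cast
      ring
    have haeval : Polynomial.aeval μ (Q.map (algebraMap ℤ ℚ)) = 0 := by
      rw [Polynomial.aeval_map_algebraMap]
      simpa [hQdef, map_sum] using hsum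
    rw [Polynomial.cyclotomic_eq_minpoly_rat hμs hs0]
    exact minpoly.dvd ℚ μ haeval
  -- combine into a product divisibility over ℚ
  have hprod : (∏ s ∈ (primSet m J).erase 1, Polynomial.cyclotomic s ℚ)
      ∣ Q.map (algebraMap ℤ ℚ) := by
    refine Finset.prod_dvd_of_coprime ?_ key
    intro s hs t ht hst
    exact Polynomial.cyclotomic.isCoprime_rat hst
  -- descend to ℤ
  set P : Polynomial ℤ := ∏ s ∈ (primSet m J).erase 1, Polynomial.cyclotomic s ℤ with hPdef
  have hPmonic : P.Monic :=
    Polynomial.monic_prod_of_monic _ _ fun s _ => Polynomial.cyclotomic.monic s ℤ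
  have hPmap : P.map (algebraMap ℤ ℚ) = ∏ s ∈ (primSet m J).erase 1,
      Polynomial.cyclotomic s ℚ := by
    rw [hPdef, Polynomial.map_prod]
    exact Finset.prod_congr rfl fun s _ => Polynomial.map_cyclotomic s (algebraMap ℤ ℚ)
  have hPQ : P ∣ Q := by
    rw [← Polynomial.map_dvd_map (algebraMap ℤ ℚ)
      (fun x y h => by exact_mod_cast h) hPmonic]
    rw [hPmap]
    exact hprod
  have := Polynomial.eval_dvd (x := (1 : ℤ)) hPQ
  rw [hQeval] at this
  have hCmP : Cm m J = P.eval 1 := by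
    rw [Cm, hPdef, Polynomial.eval_prod]
  rwa [hCmP]
end

section
/- Let m be a positive integer, let J, K ⊆ {0,1,…,m−1} with |J| = |K|, and let A be a finite set of nonnegative integers such that the sumset K ⊕ A contains exactly one representative from each congruence class modulo m (i.e., for every r ∈ {0,1,…,m−1} there is exactly one pair (k,a) ∈ K × A with k + a ≡ r mod m). If for every s ∈ P_m(J)\{1} the cyclotomic polynomial Φ_s(z) fails to divide the polynomial A(z) = ∑_{a∈A} z^a, then H_{J,K,m} is a Hadamard submatrix of the Fourier matrix F_m. -/
open Finset

/-!
Fix distinct `j₁, j₂ ∈ J` and put `ζ = e^{2πi(j₁-j₂)/m}`, a primitive `s`-th root of unity with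
`s = m / gcd(m, |j₁-j₂|) ∈ P_m(J) \ {1}`; the sum over `K` attached to `(j₁, j₂)` is `K(ζ)`.
Since `K ⊕ A` is a complete residue system and `ζ^m = 1`, `K(ζ) A(ζ) = 1 + ζ + ⋯ + ζ^{m-1} = 0`.
As `Φ_s` is the minimal polynomial of `ζ` over `ℤ` and does not divide `A(z)`, `A(ζ) ≠ 0`, so
`K(ζ) = 0`.
-/

def IsTilingMod (m : ℕ) (K A : Finset ℕ) : Prop :=
  ∀ r ∈ range m, ((K ×ˢ A).filter fun q => (q.1 + q.2) % m = r).card = 1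

theorem IsTilingMod.sum_pow_mul_sum_pow {R : Type*} [CommSemiring R] {m : ℕ} {K A : Finset ℕ}
    (hKA : IsTilingMod m K A) (hm : 0 < m) {ζ : R} (hζ : ζ ^ m = 1) :
    (∑ k ∈ K, ζ ^ k) * ∑ a ∈ A, ζ ^ a = ∑ r ∈ range m, ζ ^ r := by
  have hfiber : ∀ r ∈ range m, ∀ q ∈ (K ×ˢ A).filter (fun q => (q.1 + q.2) % m = r),
      ζ ^ (q.1 + q.2) = ζ ^ r := by
    intro r _ q hq
    rw [← (mem_filter.mp hq).2]
    conv_lhs => rw [← Nat.div_add_mod (q.1 + q.2) m, pow_add, pow_mul, hζ, one_pow, one_mul]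
  calc (∑ k ∈ K, ζ ^ k) * ∑ a ∈ A, ζ ^ a = ∑ q ∈ K ×ˢ A, ζ ^ (q.1 + q.2) := by
        simp only [sum_mul_sum, sum_product, pow_add]
    _ = ∑ r ∈ range m, ∑ q ∈ (K ×ˢ A).filter (fun q => (q.1 + q.2) % m = r), ζ ^ (q.1 + q.2) :=
        (sum_fiberwise_of_maps_to (fun q _ => mem_range.mpr (Nat.mod_lt _ hm)) _).symm
    _ = ∑ r ∈ range m, ζ ^ r := sum_congr rfl fun r hr => by
        rw [sum_congr rfl (hfiber r hr), sum_const, hKA r hr, one_smul]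

theorem IsTilingMod.sum_pow_eq_zero {R : Type*} [CommRing R] [IsDomain R] {m : ℕ}
    {K A : Finset ℕ} (hKA : IsTilingMod m K A) (hm : 0 < m) {ζ : R} (hζm : ζ ^ m = 1)
    (hζ1 : ζ ≠ 1) (hA : ∑ a ∈ A, ζ ^ a ≠ 0) : ∑ k ∈ K, ζ ^ k = 0 := by
  have hgeom : ∑ r ∈ range m, ζ ^ r = 0 :=
    (mul_eq_zero.mp (by rw [geom_sum_mul, hζm, sub_self])).resolve_right (sub_ne_zero.mpr hζ1)
  exact (mul_eq_zero.mp (hKA.sum_pow_mul_sum_pow hm hζm ▸ hgeom)).resolve_right hA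

theorem Polynomial.cyclotomic_dvd_of_aeval_eq_zero {K : Type*} [Field K] [CharZero K] {s : ℕ}
    {ζ : K} (hζ : IsPrimitiveRoot ζ s) (hs : 0 < s) {p : Polynomial ℤ}
    (hp : Polynomial.aeval ζ p = 0) : Polynomial.cyclotomic s ℤ ∣ p := by
  rw [Polynomial.cyclotomic_eq_minpoly hζ hs]
  exact minpoly.isIntegrallyClosed_dvd (hζ.isIntegral hs) hp

theorem Rat.den_intCast_div_natCast (d : ℤ) {m : ℕ} (hm : m ≠ 0) :
    ((d : ℚ) / m).den = m / m.gcd d.natAbs := by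
  rw [← Rat.mkRat_eq_div, Rat.den_mkRat, if_neg hm]

open Complex in
theorem Complex.isPrimitiveRoot_exp_intCast_div (d : ℤ) {m : ℕ} (hm : m ≠ 0) :
    IsPrimitiveRoot (exp (2 * Real.pi * I * d / m)) (m / m.gcd d.natAbs) := by
  have h := isPrimitiveRoot_exp_rat ((d : ℚ) / m)
  rw [Rat.den_intCast_div_natCast d hm] at h
  simpa only [Rat.cast_div, Rat.cast_intCast, Rat.cast_natCast, mul_div_assoc] using h

theorem one_lt_div_gcd_natAbs {d : ℤ} {m : ℕ} (hd : d ≠ 0) (hdm : d.natAbs < m) :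
    1 < m / m.gcd d.natAbs := by
  have hg : m.gcd d.natAbs ≤ d.natAbs := Nat.gcd_le_right _ (Int.natAbs_pos.mpr hd)
  exact (Nat.lt_div_iff_mul_lt' (Nat.gcd_dvd_left _ _) _).mpr (by omega)

theorem hadamard_of_tiling_general (m : ℕ) (hm : 0 < m) (J K : Finset ℕ)
    (hJ : J ⊆ Finset.range m)
    (A : Finset ℕ)
    (hA : ∀ r ∈ Finset.range m, ((K ×ˢ A).filter fun q => (q.1 + q.2) % m = r).card = 1)
    (hdvd : ∀ s ∈ (primSet m J).erase 1,
      ¬ (Polynomial.cyclotomic s ℤ ∣ ∑ a ∈ A, Polynomial.X ^ a)) :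
    IsHadamardSub m J K := by
  intro j₁ hj₁ j₂ hj₂ hne
  set d : ℤ := j₁ - j₂
  set s := m / m.gcd d.natAbs
  have hζ := Complex.isPrimitiveRoot_exp_intCast_div d hm.ne'
  have hj₁m := mem_range.mp (hJ hj₁)
  have hj₂m := mem_range.mp (hJ hj₂)
  have hs : 1 < s := one_lt_div_gcd_natAbs (by omega) (by omega)
  have hsJ : s ∈ (primSet m J).erase 1 :=
    mem_erase.mpr ⟨hs.ne', mem_image.mpr ⟨d, mem_image.mpr ⟨(j₁, j₂), mk_mem_product hj₁ hj₂, rfl⟩, rfl⟩⟩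
  have hterm : ∀ k : ℕ,
      Complex.exp (2 * Real.pi * Complex.I * ((j₁ : ℂ) - (j₂ : ℂ)) * (k : ℂ) / (m : ℂ)) =
        Complex.exp (2 * Real.pi * Complex.I * d / m) ^ k := fun k => by
    rw [← Complex.exp_nat_mul]; push_cast [d]; ring_nf
  simp only [hterm]
  refine IsTilingMod.sum_pow_eq_zero hA hm ?_ (hζ.ne_one hs) fun hA0 => hdvd s hsJ ?_
  · exact (hζ.pow_eq_one_iff_dvd m).mpr (Nat.div_dvd_of_dvd (m.gcd_dvd_left _))
  · exact Polynomial.cyclotomic_dvd_of_aeval_eq_zero hζ (by omega) (by simpa using hA0)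

theorem hadamard_of_tiling (m : ℕ) (hm : 0 < m) (J K : Finset ℕ)
    (hJ : J ⊆ Finset.range m) (hK : K ⊆ Finset.range m) (hcard : J.card = K.card)
    (A : Finset ℕ)
    (hA : ∀ r ∈ Finset.range m, ((K ×ˢ A).filter fun q => (q.1 + q.2) % m = r).card = 1)
    (hdvd : ∀ s ∈ (primSet m J).erase 1,
      ¬ (Polynomial.cyclotomic s ℤ ∣ ∑ a ∈ A, Polynomial.X ^ a)) :
    IsHadamardSub m J K :=
  hadamard_of_tiling_general m hm J K hJ A hA hdvd
end

section
/- Let m be a positive integer and J, K ⊆ {0,1,…,m−1} with |J| = |K| such that H_{J,K,m} is a Hadamard submatrix of the Fourier matrix F_m. Let L ⊆ {0,1,…,m−1} with |L| > |J|. Then P_m(L) ≠ P_m(J). -/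
open Finset

section AuxHelpers
open Polynomial


-- key transfer lemma
private lemma aux_key {s : ℕ} (hs : 0 < s) {x y : ℂ} (hx : IsPrimitiveRoot x s)
    (hy : IsPrimitiveRoot y s) {Q : ℚ[X]} (hQ : aeval x Q = 0) : aeval y Q = 0 := by
  have hmin : cyclotomic s ℚ = minpoly ℚ x := cyclotomic_eq_minpoly_rat hx hs
  have hdvd : minpoly ℚ x ∣ Q := minpoly.dvd ℚ x hQ
  rw [← hmin] at hdvd
  obtain ⟨R, hR⟩ := hdvd
  have hcyc : aeval y (cyclotomic s ℚ) = 0 := by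
    rw [aeval_def, ← eval_map, map_cyclotomic]
    exact (hy.isRoot_cyclotomic hs)
  rw [hR, map_mul, hcyc, zero_mul]

private lemma aux_pow_prim {m : ℕ} (hm : 0 < m) {ζ : ℂ} (hζ : IsPrimitiveRoot ζ m) (a : ℕ) :
    IsPrimitiveRoot (ζ ^ a) (m / Nat.gcd m a) := by
  rcases Nat.eq_zero_or_pos a with rfl | ha
  · simpa [Nat.div_self hm] using (IsPrimitiveRoot.one (M := ℂ))
  · have h1 : orderOf ζ = m := hζ.eq_orderOf.symm
    have h2 := IsPrimitiveRoot.orderOf (ζ ^ a)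
    rwa [orderOf_pow' ζ ha.ne', h1] at h2

private lemma aux_gcd_emod (m : ℕ) (hm : 0 < m) (d : ℤ) :
    Nat.gcd m ((d % m).toNat) = Nat.gcd m d.natAbs := by
  have hmz : (m:ℤ) ≠ 0 := by exact_mod_cast hm.ne'
  have h1 : (((d % m).toNat) : ℤ) = d % m := Int.toNat_of_nonneg (Int.emod_nonneg d hmz)
  have key : ∀ g : ℕ, (g:ℤ) ∣ (m:ℤ) → (((g:ℤ) ∣ d % m) ↔ ((g:ℤ) ∣ d)) := by
    intro g hgm
    rw [Int.emod_def]
    constructor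
    · intro h
      have := dvd_add h (hgm.mul_right (d / m))
      simpa using this
    · intro h
      exact dvd_sub h (hgm.mul_right (d / m))
  apply Nat.dvd_antisymm
  · apply Nat.dvd_gcd (Nat.gcd_dvd_left _ _)
    have hg : (Nat.gcd m ((d % m).toNat) : ℤ) ∣ d % m := by
      rw [← h1]; exact_mod_cast Nat.gcd_dvd_right _ _
    have := (key _ (by exact_mod_cast Nat.gcd_dvd_left m ((d % m).toNat))).mp hg
    rwa [← Int.natCast_dvd_natCast, Int.dvd_natAbs]
  · apply Nat.dvd_gcd (Nat.gcd_dvd_left _ _)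
    have hg : (Nat.gcd m d.natAbs : ℤ) ∣ d := by
      rw [← Int.dvd_natAbs]; exact_mod_cast Nat.gcd_dvd_right m d.natAbs
    have := (key _ (by exact_mod_cast Nat.gcd_dvd_left m d.natAbs)).mpr hg
    rw [← h1] at this
    rwa [Int.natCast_dvd_natCast] at this


private lemma aux_zpow_eq {m : ℕ} (hm : 0 < m) {ζ : ℂ} (hζ : IsPrimitiveRoot ζ m) (d : ℤ) :
    ζ ^ d = ζ ^ ((d % m).toNat) := by
  have hζ0 : ζ ≠ 0 := hζ.ne_zero hm.ne'
  have hmz : (m:ℤ) ≠ 0 := by exact_mod_cast hm.ne'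
  have h1 : (((d % m).toNat) : ℤ) = d % m := Int.toNat_of_nonneg (Int.emod_nonneg d hmz)
  conv_lhs => rw [← Int.mul_ediv_add_emod d m]
  rw [zpow_add₀ hζ0, zpow_mul, zpow_natCast, hζ.pow_eq_one, one_zpow, one_mul, ← h1,
    zpow_natCast, Int.toNat_natCast]

private lemma aux_zpow_prim {m : ℕ} (hm : 0 < m) {ζ : ℂ} (hζ : IsPrimitiveRoot ζ m) (d : ℤ) :
    IsPrimitiveRoot (ζ ^ d) (m / Nat.gcd m d.natAbs) := by
  rw [aux_zpow_eq hm hζ d, ← aux_gcd_emod m hm d]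
  exact aux_pow_prim hm hζ _

private lemma aux_conj {m : ℕ} (hm : 0 < m) (a : ℤ) :
    (starRingEnd ℂ) ((Complex.exp (2 * Real.pi * Complex.I / m)) ^ a)
      = (Complex.exp (2 * Real.pi * Complex.I / m)) ^ (-a) := by
  have h : (starRingEnd ℂ) (Complex.exp (2 * Real.pi * Complex.I / m))
      = (Complex.exp (2 * Real.pi * Complex.I / m))⁻¹ := by
    rw [← Complex.exp_conj, ← Complex.exp_neg]
    congr 1
    simp [map_div₀, Complex.conj_I, Complex.conj_ofReal, map_ofNat]
    ring
  rw [map_zpow₀, h, inv_zpow, ← zpow_neg]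

private lemma aux_exp_pow {m : ℕ} (hm : 0 < m) (a : ℤ) (k : ℕ) :
    Complex.exp (2 * Real.pi * Complex.I * (a : ℂ) * (k : ℂ) / (m : ℂ))
      = ((Complex.exp (2 * Real.pi * Complex.I / m)) ^ a) ^ k := by
  rw [← zpow_natCast, ← zpow_mul, ← Complex.exp_int_mul]
  congr 1
  push_cast
  ring

end AuxHelpers
private lemma aux_term {m : ℕ} (hm : 0 < m) (l₁ l₂ k : ℕ) :
    (Complex.exp (2 * Real.pi * Complex.I / m)) ^ (l₁ * k) *
      (starRingEnd ℂ) ((Complex.exp (2 * Real.pi * Complex.I / m)) ^ (l₂ * k))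
      = ((Complex.exp (2 * Real.pi * Complex.I / m)) ^ ((l₁ : ℤ) - (l₂ : ℤ))) ^ k := by
  set ζ : ℂ := Complex.exp (2 * Real.pi * Complex.I / m) with hζdef
  have hζ : IsPrimitiveRoot ζ m := Complex.isPrimitiveRoot_exp m hm.ne'
  have hζ0 : ζ ≠ 0 := hζ.ne_zero hm.ne'
  have h1 : ζ ^ (l₁ * k) = ζ ^ ((l₁ * k : ℕ) : ℤ) := (zpow_natCast ζ _).symm
  have h2 : (starRingEnd ℂ) (ζ ^ (l₂ * k)) = ζ ^ (-((l₂ * k : ℕ) : ℤ)) := by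
    rw [← zpow_natCast ζ (l₂ * k)]
    exact aux_conj hm _
  rw [h1, h2, ← zpow_add₀ hζ0, ← zpow_natCast (ζ ^ ((l₁:ℤ) - l₂)) k, ← zpow_mul]
  congr 1
  push_cast
  ring

theorem primSet_ne_of_card_gt (m : ℕ) (hm : 0 < m) (J K L : Finset ℕ)
    (hJ : J ⊆ Finset.range m) (hK : K ⊆ Finset.range m) (hL : L ⊆ Finset.range m)
    (hcard : J.card = K.card) (hH : IsHadamardSub m J K) (hLJ : J.card < L.card) :
    primSet m L ≠ primSet m J := by
  classical
  intro hP
  set ζ : ℂ := Complex.exp (2 * Real.pi * Complex.I / m) with hζdef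
  have hζ : IsPrimitiveRoot ζ m := Complex.isPrimitiveRoot_exp m hm.ne'
  have hζ0 : ζ ≠ 0 := hζ.ne_zero hm.ne'
  set Q : Polynomial ℚ := ∑ k ∈ K, Polynomial.X ^ k with hQdef
  have hQeval : ∀ x : ℂ, Polynomial.aeval x Q = ∑ k ∈ K, x ^ k := by
    intro x; simp [hQdef]
  have hLne : L.Nonempty := Finset.card_pos.mp (Nat.lt_of_le_of_lt (Nat.zero_le _) hLJ)
  have hKcard : K.card ≠ 0 := by
    intro h0
    have hJe : J = ∅ := Finset.card_eq_zero.mp (hcard.trans h0)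
    have h1 : primSet m J = ∅ := by simp [primSet, diffSet, hJe]
    obtain ⟨l, hl⟩ := hLne
    have h2 : (1:ℕ) ∈ primSet m L := by
      apply Finset.mem_image.mpr
      refine ⟨0, ?_, by simp [Nat.div_self hm]⟩
      exact Finset.mem_image.mpr ⟨(l,l), Finset.mem_product.mpr ⟨hl,hl⟩, by simp⟩
    rw [hP, h1] at h2
    exact absurd h2 (Finset.notMem_empty _)
  -- Hadamard hypothesis in root-of-unity form
  have hH' : ∀ j₁ ∈ J, ∀ j₂ ∈ J, j₁ ≠ j₂ →
      Polynomial.aeval (ζ ^ ((j₁:ℤ) - (j₂:ℤ))) Q = 0 := by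
    intro j₁ hj₁ j₂ hj₂ hne
    have hsum := hH j₁ hj₁ j₂ hj₂ hne
    rw [hQeval]
    have e : ∀ k ∈ K, (ζ ^ ((j₁:ℤ) - (j₂:ℤ))) ^ k
        = Complex.exp (2 * Real.pi * Complex.I * ((j₁ : ℂ) - (j₂ : ℂ)) * (k : ℂ) / (m : ℂ)) := by
      intro k _
      rw [← aux_exp_pow hm ((j₁:ℤ) - (j₂:ℤ)) k]
      congr 2
      push_cast
      ring
    rw [Finset.sum_congr rfl e]
    exact hsum
  -- the main vanishing lemma
  have hmain : ∀ d : ℤ, d ≠ 0 → d.natAbs < m →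
      (m / Nat.gcd m d.natAbs) ∈ primSet m J → Polynomial.aeval (ζ ^ d) Q = 0 := by
    intro d hd0 hdm hs
    obtain ⟨d', hd'mem, hss⟩ := Finset.mem_image.mp hs
    have hgdvd : Nat.gcd m d.natAbs ∣ m := Nat.gcd_dvd_left _ _
    have hgdvd' : Nat.gcd m d'.natAbs ∣ m := Nat.gcd_dvd_left _ _
    have hg : Nat.gcd m d'.natAbs = Nat.gcd m d.natAbs := by
      have e1 := Nat.div_div_self hgdvd' hm.ne'
      have e2 := Nat.div_div_self hgdvd hm.ne'
      rw [← e1, ← e2, hss]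
    obtain ⟨q, hq, hqd⟩ := Finset.mem_image.mp hd'mem
    obtain ⟨hq1, hq2⟩ := Finset.mem_product.mp hq
    have hne : q.1 ≠ q.2 := by
      rintro he
      rw [he, sub_self] at hqd
      rw [← hqd] at hg
      simp only [Int.natAbs_zero, Nat.gcd_zero_right] at hg
      have : m ∣ d.natAbs := hg ▸ Nat.gcd_dvd_right m d.natAbs
      exact hd0 (Int.natAbs_eq_zero.mp (Nat.eq_zero_of_dvd_of_lt this hdm))
    have spos : 0 < m / Nat.gcd m d.natAbs :=
      Nat.div_pos (Nat.le_of_dvd hm hgdvd) (Nat.gcd_pos_of_pos_left _ hm)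
    have hx : IsPrimitiveRoot (ζ ^ d') (m / Nat.gcd m d.natAbs) := by
      rw [← hg]; exact aux_zpow_prim hm hζ d'
    have hy : IsPrimitiveRoot (ζ ^ d) (m / Nat.gcd m d.natAbs) := aux_zpow_prim hm hζ d
    have hQx : Polynomial.aeval (ζ ^ d') Q = 0 := by
      rw [← hqd]
      exact hH' q.1 hq1 q.2 hq2 hne
    exact aux_key spos hx hy hQx
  -- orthogonality of the rows indexed by L
  have hsum : ∀ l₁ ∈ L, ∀ l₂ ∈ L, (∑ k ∈ K, ζ ^ (l₁ * k) * (starRingEnd ℂ) (ζ ^ (l₂ * k)))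
      = if l₁ = l₂ then (K.card : ℂ) else 0 := by
    intro l₁ h₁ l₂ h₂
    rw [Finset.sum_congr rfl (fun k _ => aux_term hm l₁ l₂ k)]
    by_cases he : l₁ = l₂
    · subst he
      simp
    · rw [if_neg he, ← hQeval]
      have hd0 : ((l₁:ℤ) - (l₂:ℤ)) ≠ 0 := by
        intro h; apply he; omega
      have hdm : ((l₁:ℤ) - (l₂:ℤ)).natAbs < m := by
        have := Finset.mem_range.mp (hL h₁)
        have := Finset.mem_range.mp (hL h₂)
        omega
      apply hmain _ hd0 hdm
      rw [← hP]
      exact Finset.mem_image.mpr ⟨_, Finset.mem_image.mpr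
        ⟨(l₁, l₂), Finset.mem_product.mpr ⟨h₁, h₂⟩, rfl⟩, rfl⟩
  -- linear independence
  let v : {x // x ∈ L} → ({x // x ∈ K} → ℂ) := fun l k => ζ ^ ((l : ℕ) * (k : ℕ))
  have hli : LinearIndependent ℂ v := by
    rw [Fintype.linearIndependent_iff]
    intro g hg l₀
    have h0 := congrArg
      (fun w : ({x // x ∈ K} → ℂ) => ∑ k : {x // x ∈ K}, w k * (starRingEnd ℂ) (v l₀ k)) hg
    simp only [Finset.sum_apply, Pi.smul_apply, smul_eq_mul, Pi.zero_apply, zero_mul,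
      Finset.sum_const_zero, Finset.sum_mul] at h0
    rw [Finset.sum_comm] at h0
    have h1 : ∀ l : {x // x ∈ L},
        (∑ k : {x // x ∈ K}, g l * v l k * (starRingEnd ℂ) (v l₀ k))
        = g l * (if (l : ℕ) = (l₀ : ℕ) then (K.card : ℂ) else 0) := by
      intro l
      simp only [mul_assoc]
      rw [← Finset.mul_sum]
      congr 1
      rw [← hsum (l : ℕ) l.2 (l₀ : ℕ) l₀.2]
      exact Finset.sum_coe_sort K
        (fun k => ζ ^ ((l:ℕ) * k) * (starRingEnd ℂ) (ζ ^ ((l₀:ℕ) * k)))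
    rw [Finset.sum_congr rfl (fun l _ => h1 l)] at h0
    rw [Finset.sum_eq_single l₀ (fun b _ hb => by
      rw [if_neg (fun hc => hb (Subtype.ext hc)), mul_zero])
      (fun hl₀ => absurd (Finset.mem_univ l₀) hl₀)] at h0
    rw [if_pos rfl] at h0
    rcases mul_eq_zero.mp h0 with h | h
    · exact h
    · exact absurd (Nat.cast_eq_zero.mp h) hKcard
  have hfin := hli.fintype_card_le_finrank
  rw [Module.finrank_fintype_fun_eq_card] at hfin
  simp only [Fintype.card_coe] at hfin
  omega
end

section
/- Let m be a positive integer. Suppose J, K ⊆ {0,1,…,m−1} with |J| = |K| = n are such that H_{J,K,m} is a Hadamard submatrix of F_m, and J′, K′ ⊆ {0,1,…,m−1} with |J′| = |K′| = n′ are such that H_{J′,K′,m} is a Hadamard submatrix of F_m. If n ≠ n′, then P_m(J) ≠ P_m(J′). -/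
open Finset

open Polynomial in
-- transfer lemma
lemma transfer {K : Finset ℕ} {ξ ξ' : ℂ} {s : ℕ} (hs : 0 < s)
    (h : IsPrimitiveRoot ξ s) (h' : IsPrimitiveRoot ξ' s)
    (hsum : ∑ k ∈ K, ξ ^ k = 0) : ∑ k ∈ K, ξ' ^ k = 0 := by
  classical
  set F : Polynomial ℚ := ∑ k ∈ K, X ^ k with hF
  have hev : ∀ (z : ℂ), aeval z F = ∑ k ∈ K, z ^ k := by
    intro z; simp [hF]
  have h0 : aeval ξ F = 0 := by rw [hev]; exact hsum
  have hdvd : cyclotomic s ℚ ∣ F := by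
    rw [cyclotomic_eq_minpoly_rat h hs]
    exact minpoly.dvd ℚ ξ h0
  obtain ⟨q, hq⟩ := hdvd
  have hz : aeval ξ' F = 0 := by
    rw [hq, map_mul]
    have hc : aeval ξ' (cyclotomic s ℚ) = 0 := by
      have hr := h'.isRoot_cyclotomic hs (R := ℂ)
      rw [aeval_def, ← Polynomial.eval_map, Polynomial.map_cyclotomic]
      exact hr
    rw [hc, zero_mul]
  rw [← hev ξ']; exact hz


-- primitivity of exp(2πi d / m)
lemma prim_exp (m : ℕ) (hm : 0 < m) (d : ℤ) :
    IsPrimitiveRoot (Complex.exp (2 * Real.pi * Complex.I * d / m))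
      (m / Nat.gcd m d.natAbs) := by
  have hm' : (m : ℤ) ≠ 0 := by exact_mod_cast hm.ne'
  set e : ℕ := (d % m).toNat with he
  have hecast : (e : ℤ) = d % m := Int.toNat_of_nonneg (Int.emod_nonneg d hm')
  have hint : (e : ℤ) = d - m * (d / m) := by
    rw [hecast, Int.emod_def]
  have hgcd : Nat.gcd m e = Nat.gcd m d.natAbs := by
    have key : ∀ c : ℕ, c ∣ m → (c ∣ e ↔ c ∣ d.natAbs) := by
      intro c hc
      rw [← Int.natCast_dvd_natCast, ← Int.natCast_dvd_natCast, Int.dvd_natAbs, hint]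
      have hcm : (c : ℤ) ∣ (m : ℤ) := Int.natCast_dvd_natCast.mpr hc
      constructor
      · intro h
        have := dvd_add h (hcm.mul_right (d / m))
        simpa using this
      · intro h
        exact dvd_sub h (hcm.mul_right (d / m))
    apply Nat.dvd_antisymm
    · exact Nat.dvd_gcd (Nat.gcd_dvd_left _ _)
        ((key _ (Nat.gcd_dvd_left _ _)).mp (Nat.gcd_dvd_right _ _))
    · exact Nat.dvd_gcd (Nat.gcd_dvd_left _ _)
        ((key _ (Nat.gcd_dvd_left _ _)).mpr (Nat.gcd_dvd_right _ _))
  set ζ : ℂ := Complex.exp (2 * Real.pi * Complex.I / m) with hζ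
  have hprimζ : IsPrimitiveRoot ζ m := Complex.isPrimitiveRoot_exp m hm.ne'
  have hval : Complex.exp (2 * Real.pi * Complex.I * d / m) = ζ ^ e := by
    rw [hζ, ← Complex.exp_nat_mul, Complex.exp_eq_exp_iff_exists_int]
    refine ⟨d / m, ?_⟩
    have hC : (d : ℂ) = (e : ℂ) + (m : ℂ) * ((d / (m:ℤ) : ℤ) : ℂ) := by
      have h2 : ((e : ℤ) : ℂ) = ((d - m * (d / m) : ℤ) : ℂ) := by rw [hint]
      push_cast at h2
      rw [h2]; ring
    have hmc : (m : ℂ) ≠ 0 := by exact_mod_cast hm.ne'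
    field_simp
    rw [hC]
  rw [hval, ← hgcd]
  rcases Nat.eq_zero_or_pos e with he0 | hepos
  · rw [he0]
    simp only [pow_zero, Nat.gcd_zero_right, Nat.div_self hm]
    exact IsPrimitiveRoot.one
  · have horder : orderOf ζ = m := (hprimζ.eq_orderOf).symm
    have hpr := IsPrimitiveRoot.orderOf (ζ ^ e)
    rwa [orderOf_pow' ζ hepos.ne', horder] at hpr


lemma card_le_of_orth (m : ℕ) (K J2 : Finset ℕ) (hKne : K.Nonempty)
    (horth : IsHadamardSub m J2 K) : J2.card ≤ K.card := by
  classical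
  set A : Matrix J2 K ℂ :=
    fun j k => Complex.exp (2 * Real.pi * Complex.I * ((j : ℕ) : ℂ) * ((k : ℕ) : ℂ) / m) with hA
  have hAA : A * A.conjTranspose = ((K.card : ℂ) • 1 : Matrix J2 J2 ℂ) := by
    ext j1 j2
    have hterm : ∀ k : K, A j1 k * star (A j2 k)
        = Complex.exp (2 * Real.pi * Complex.I * (((j1 : ℕ) : ℂ) - ((j2 : ℕ) : ℂ)) * ((k : ℕ) : ℂ) / m) := by
      intro k
      have hstar : star (A j2 k)
          = Complex.exp (-(2 * Real.pi * Complex.I * ((j2 : ℕ) : ℂ) * ((k : ℕ) : ℂ) / m)) := by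
        rw [hA, ← starRingEnd_apply, ← Complex.exp_conj]
        congr 1
        simp only [map_div₀, map_mul, Complex.conj_I, Complex.conj_ofReal, map_natCast, map_ofNat]
        ring
      rw [hstar, hA, ← Complex.exp_add]
      congr 1
      ring
    have hsum : ∑ k : K, A j1 k * star (A j2 k)
        = ∑ k ∈ K, Complex.exp (2 * Real.pi * Complex.I * (((j1 : ℕ) : ℂ) - ((j2 : ℕ) : ℂ)) * ((k : ℕ) : ℂ) / m) := by
      rw [Finset.sum_congr rfl (fun k _ => hterm k)]
      exact Finset.sum_coe_sort K (fun k => Complex.exp (2 * Real.pi * Complex.I * (((j1 : ℕ) : ℂ) - ((j2 : ℕ) : ℂ)) * ((k : ℕ) : ℂ) / m))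
    simp only [Matrix.mul_apply, Matrix.conjTranspose_apply, Matrix.smul_apply,
      Matrix.one_apply, smul_eq_mul]
    by_cases hj : j1 = j2
    · subst hj
      rw [if_pos rfl, mul_one, hsum]
      have : ∀ k ∈ K, Complex.exp (2 * Real.pi * Complex.I * (((j1 : ℕ) : ℂ) - ((j1 : ℕ) : ℂ)) * ((k : ℕ) : ℂ) / m) = 1 := by
        intro k _
        simp
      rw [Finset.sum_congr rfl this]
      simp
    · rw [if_neg hj, mul_zero, hsum]
      exact horth j1 j1.2 j2 j2.2 (fun h => hj (Subtype.ext h))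
  have hc : (K.card : ℂ) ≠ 0 := by
    exact_mod_cast (Nat.pos_of_ne_zero (fun h => by simp [Finset.card_eq_zero.mp h] at hKne)).ne'
  have hunit : IsUnit ((K.card : ℂ) • 1 : Matrix J2 J2 ℂ) := by
    rw [Matrix.isUnit_iff_isUnit_det, Matrix.det_smul, Matrix.det_one, mul_one, isUnit_iff_ne_zero]
    exact pow_ne_zero _ hc
  have h1 : (A * A.conjTranspose).rank = Fintype.card J2 := by
    rw [hAA]; exact Matrix.rank_of_isUnit _ hunit
  have h2 : (A * A.conjTranspose).rank ≤ A.rank := Matrix.rank_mul_le_left _ _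
  have h3 : A.rank ≤ Fintype.card K := Matrix.rank_le_card_width A
  have := le_trans (h1 ▸ h2) h3
  simpa [Fintype.card_coe] using this

lemma sum_exp_pow (m : ℕ) (K : Finset ℕ) (d : ℤ) (a b : ℕ) (hd : d = (a : ℤ) - b) :
    ∑ k ∈ K, Complex.exp (2 * Real.pi * Complex.I * (d : ℂ) / m) ^ k
      = ∑ k ∈ K, Complex.exp (2 * Real.pi * Complex.I * ((a : ℂ) - (b : ℂ)) * (k : ℂ) / (m : ℂ)) := by
  refine Finset.sum_congr rfl fun k _ => ?_
  rw [← Complex.exp_nat_mul]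
  congr 1
  have hdc : (d : ℂ) = (a : ℂ) - (b : ℂ) := by rw [hd]; push_cast; ring
  rw [hdc]; ring

lemma key_card_le (m : ℕ) (hm : 0 < m) (J K J2 : Finset ℕ)
    (hJ2 : J2 ⊆ Finset.range m)
    (hcard : J.card = K.card) (hH : IsHadamardSub m J K)
    (hsub : primSet m J2 ⊆ primSet m J) : J2.card ≤ K.card := by
  rcases K.eq_empty_or_nonempty with hKe | hKne
  · subst hKe
    have hJe : J = ∅ := Finset.card_eq_zero.mp (by simpa using hcard)
    rw [hJe] at hsub
    have hPJ2 : primSet m J2 = ∅ := by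
      apply Finset.subset_empty.mp
      simpa [primSet, diffSet] using hsub
    have hJ2e : J2 = ∅ := by
      by_contra hne
      obtain ⟨x, hx⟩ := Finset.nonempty_iff_ne_empty.mpr hne
      have h0 : (0 : ℤ) ∈ diffSet J2 :=
        Finset.mem_image.mpr ⟨(x, x), Finset.mem_product.mpr ⟨hx, hx⟩, by simp⟩
      have hmem : m / Nat.gcd m (0 : ℤ).natAbs ∈ primSet m J2 := Finset.mem_image_of_mem _ h0
      rw [hPJ2] at hmem
      simp at hmem
    simp [hJ2e]
  · apply card_le_of_orth m K J2 hKne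
    intro j1 hj1 j2 hj2 hne
    set d : ℤ := (j1 : ℤ) - j2 with hd
    have hj1m : j1 < m := Finset.mem_range.mp (hJ2 hj1)
    have hj2m : j2 < m := Finset.mem_range.mp (hJ2 hj2)
    have hdna : d.natAbs ≠ 0 := by omega
    have hdlt : d.natAbs < m := by omega
    set g := Nat.gcd m d.natAbs with hg
    have hgpos : 0 < g := Nat.gcd_pos_of_pos_left _ hm
    have hgdvd : g ∣ m := Nat.gcd_dvd_left _ _
    have hglt : g < m :=
      lt_of_le_of_lt (Nat.le_of_dvd (Nat.pos_of_ne_zero hdna) (Nat.gcd_dvd_right _ _)) hdlt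
    set s := m / g with hs
    have hspos : 0 < s := Nat.div_pos (Nat.le_of_dvd hm hgdvd) hgpos
    have h1s : 1 < s := by
      rcases Nat.lt_or_ge 1 s with h | h
      · exact h
      · exfalso
        have hseq : s = 1 := le_antisymm h hspos
        have hmul : m / g * g = m := Nat.div_mul_cancel hgdvd
        rw [← hs, hseq, one_mul] at hmul
        omega
    have hmem2 : s ∈ primSet m J2 := by
      have hdmem : d ∈ diffSet J2 :=
        Finset.mem_image.mpr ⟨(j1, j2), Finset.mem_product.mpr ⟨hj1, hj2⟩, by simp [hd]⟩
      exact Finset.mem_image_of_mem _ hdmem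
    have hmem : s ∈ primSet m J := hsub hmem2
    obtain ⟨d₀, hd₀mem, hd₀s⟩ := Finset.mem_image.mp hmem
    obtain ⟨q, hqmem, hq⟩ := Finset.mem_image.mp hd₀mem
    obtain ⟨ha, hb⟩ := Finset.mem_product.mp hqmem
    have hne0 : q.1 ≠ q.2 := by
      intro hqq
      rw [← hq, hqq] at hd₀s
      simp [Nat.div_self hm] at hd₀s
      omega
    have h0 := hH q.1 ha q.2 hb hne0
    have hsum0 : ∑ k ∈ K, Complex.exp (2 * Real.pi * Complex.I * (d₀ : ℂ) / m) ^ k = 0 := by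
      rw [sum_exp_pow m K d₀ q.1 q.2 hq.symm]
      exact h0
    have hp0 : IsPrimitiveRoot (Complex.exp (2 * Real.pi * Complex.I * (d₀ : ℂ) / m)) s := by
      have := prim_exp m hm d₀
      rwa [hd₀s] at this
    have hp1 : IsPrimitiveRoot (Complex.exp (2 * Real.pi * Complex.I * (d : ℂ) / m)) s :=
      prim_exp m hm d
    have htr := transfer hspos hp0 hp1 hsum0
    rw [sum_exp_pow m K d j1 j2 hd] at htr
    exact htr

theorem primSet_ne_of_size_ne (m n n' : ℕ) (hm : 0 < m) (J K J' K' : Finset ℕ)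
    (hJ : J ⊆ Finset.range m) (hK : K ⊆ Finset.range m)
    (hJ' : J' ⊆ Finset.range m) (hK' : K' ⊆ Finset.range m)
    (hJn : J.card = n) (hKn : K.card = n) (hJn' : J'.card = n') (hKn' : K'.card = n')
    (hH : IsHadamardSub m J K) (hH' : IsHadamardSub m J' K') (hnn : n ≠ n') :
    primSet m J ≠ primSet m J' := by
  intro heq
  have h1 : J'.card ≤ K.card :=
    key_card_le m hm J K J' hJ' (hJn.trans hKn.symm) hH (by rw [heq])
  have h2 : J.card ≤ K'.card :=
    key_card_le m hm J' K' J hJ (hJn'.trans hKn'.symm) hH' (by rw [heq])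
  omega
end

section
/- Let m and v be positive integers and let J, K ⊆ {0,1,…,m−1} with |J| = |K| = n be such that H_{J,K,m} is a Hadamard submatrix of the Fourier matrix F_m. Let vJ = {v·j : j ∈ J} ⊆ {0,1,…,vm−1}. Then H_{vJ,K,vm} is an n×n Hadamard submatrix of the Fourier matrix F_{vm}, and P_{vm}(vJ) = P_m(J). Consequently, every set that occurs as the m-th primitive set of the row set of an n×n Hadamard submatrix of F_m also occurs as the vm-th primitive set of the row set of an n×n Hadamard submatrix of F_{vm}. -/
open Finset

lemma hadamard_scale_key (m v : ℕ) (hm : 0 < m) (hv : 0 < v) (J K : Finset ℕ)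
    (hJ : J ⊆ Finset.range m) (hH : IsHadamardSub m J K) :
    (J.image fun j => v * j) ⊆ Finset.range (v * m) ∧
    (J.image fun j => v * j).card = J.card ∧
    IsHadamardSub (v * m) (J.image fun j => v * j) K ∧
    primSet (v * m) (J.image fun j => v * j) = primSet m J := by
  refine ⟨?_, ?_, ?_, ?_⟩
  · intro x hx
    simp only [Finset.mem_image] at hx
    obtain ⟨j, hj, rfl⟩ := hx
    have := hJ hj
    simp only [Finset.mem_range] at this ⊢
    exact (Nat.mul_lt_mul_left hv).mpr this
  · exact Finset.card_image_of_injective _ fun a b h => Nat.eq_of_mul_eq_mul_left hv h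
  · intro j₁ h₁ j₂ h₂ hne
    simp only [Finset.mem_image] at h₁ h₂
    obtain ⟨a, ha, rfl⟩ := h₁
    obtain ⟨b, hb, rfl⟩ := h₂
    have hab : a ≠ b := fun h => hne (by rw [h])
    have := hH a ha b hb hab
    rw [← this]
    apply Finset.sum_congr rfl
    intro k _
    congr 1
    have hv' : (v:ℂ) ≠ 0 := Nat.cast_ne_zero.mpr hv.ne'
    have hm' : (m:ℂ) ≠ 0 := Nat.cast_ne_zero.mpr hm.ne'
    push_cast
    field_simp
  · have hd : diffSet (J.image fun j => v * j) = (diffSet J).image fun d => (v:ℤ) * d := by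
      ext x
      simp only [diffSet, Finset.mem_image, Finset.mem_product, Prod.exists]
      constructor
      · rintro ⟨a, b, ⟨⟨ja, hja, rfl⟩, ⟨jb, hjb, rfl⟩⟩, rfl⟩
        exact ⟨(ja:ℤ) - jb, ⟨ja, jb, ⟨hja, hjb⟩, rfl⟩, by push_cast; ring⟩
      · rintro ⟨d, ⟨ja, jb, ⟨hja, hjb⟩, rfl⟩, rfl⟩
        exact ⟨v*ja, v*jb, ⟨⟨ja, hja, rfl⟩, ⟨jb, hjb, rfl⟩⟩, by push_cast; ring⟩
    unfold primSet
    rw [hd, Finset.image_image]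
    apply Finset.image_congr
    intro d _
    simp only [Function.comp_apply, Int.natAbs_mul, Int.natAbs_natCast]
    rw [Nat.gcd_mul_left, Nat.mul_div_mul_left _ _ hv]

theorem hadamard_scale (m v n : ℕ) (hm : 0 < m) (hv : 0 < v) (J K : Finset ℕ)
    (hJ : J ⊆ Finset.range m) (hK : K ⊆ Finset.range m)
    (hJn : J.card = n) (hKn : K.card = n) (hH : IsHadamardSub m J K) :
    (J.image fun j => v * j) ⊆ Finset.range (v * m) ∧
    (J.image fun j => v * j).card = n ∧
    IsHadamardSub (v * m) (J.image fun j => v * j) K ∧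
    primSet (v * m) (J.image fun j => v * j) = primSet m J ∧
    (∀ P : Finset ℕ,
      (∃ J₀ K₀ : Finset ℕ, J₀ ⊆ Finset.range m ∧ K₀ ⊆ Finset.range m ∧
        J₀.card = n ∧ K₀.card = n ∧ IsHadamardSub m J₀ K₀ ∧ P = primSet m J₀) →
      (∃ J₁ K₁ : Finset ℕ, J₁ ⊆ Finset.range (v * m) ∧ K₁ ⊆ Finset.range (v * m) ∧
        J₁.card = n ∧ K₁.card = n ∧ IsHadamardSub (v * m) J₁ K₁ ∧
        P = primSet (v * m) J₁)) := by
  obtain ⟨h1, h2, h3, h4⟩ := hadamard_scale_key m v hm hv J K hJ hH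
  refine ⟨h1, h2.trans hJn, h3, h4, ?_⟩
  rintro P ⟨J₀, K₀, hJ₀, hK₀, hJ₀n, hK₀n, hH₀, rfl⟩
  obtain ⟨g1, g2, g3, g4⟩ := hadamard_scale_key m v hm hv J₀ K₀ hJ₀ hH₀
  refine ⟨J₀.image fun j => v * j, K₀, g1, ?_, g2.trans hJ₀n, hK₀n, g3, g4.symm⟩
  exact hK₀.trans (Finset.range_subset_range.mpr (Nat.le_mul_of_pos_left m hv))
end

section
/- Let m, m′ be positive integers. Suppose J, K ⊆ {0,1,…,m−1} with |J| = |K| = n are such that H_{J,K,m} is a Hadamard submatrix of F_m, and J′, K′ ⊆ {0,1,…,m′−1} with |J′| = |K′| = n′ are such that H_{J′,K′,m′} is a Hadamard submatrix of F_{m′}. If n ≠ n′, then P_m(J) ≠ P_{m′}(J′). -/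
open Finset

/-!
If `P_m(J) ⊆ P_{m'}(J')`, take distinct `j₁, j₂ ∈ J`; then `ξ = e^{2πi(j₁-j₂)/m}` is a primitive
`s`-th root of unity for some `s ∈ P_{m'}(J')`, `s ≠ 1`. The Hadamard property of `(J', K')` makes
`∑_{k ∈ K'} X^k` vanish at some primitive `s`-th root, hence, since `Φ_s` is irreducible over `ℚ`,
at all of them, in particular at `ξ`. So the rows `J` of `F_m` restricted to the columns `K'` are
pairwise orthogonal, and `|J| ≤ |K'|`. Equal primitive sets therefore force `n ≤ n'` and `n' ≤ n`.
-/

open Complex Polynomial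

theorem IsPrimitiveRoot.pow_div_gcd {M : Type*} [CommMonoid M] {ζ : M} {k : ℕ}
    (h : IsPrimitiveRoot ζ k) (hk : k ≠ 0) (a : ℕ) :
    IsPrimitiveRoot (ζ ^ a) (k / k.gcd a) := by
  rw [IsPrimitiveRoot.iff_orderOf, (h.isOfFinOrder hk).orderOf_pow, ← h.eq_orderOf]

theorem IsPrimitiveRoot.zpow_div_gcd {G : Type*} [DivisionCommMonoid G] {ζ : G} {k : ℕ}
    (h : IsPrimitiveRoot ζ k) (hk : k ≠ 0) (d : ℤ) :
    IsPrimitiveRoot (ζ ^ d) (k / k.gcd d.natAbs) := by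
  obtain ⟨a, rfl | rfl⟩ := Int.eq_nat_or_neg d
  · simpa using h.pow_div_gcd hk a
  · simpa using (h.pow_div_gcd hk a).inv

theorem IsPrimitiveRoot.aeval_eq_zero_of_aeval_eq_zero {K : Type*} [Field K] [CharZero K]
    {ζ ξ : K} {s : ℕ} (hs : 0 < s) (hζ : IsPrimitiveRoot ζ s) (hξ : IsPrimitiveRoot ξ s)
    {p : ℚ[X]} (hp : aeval ζ p = 0) : aeval ξ p = 0 := by
  obtain ⟨q, rfl⟩ : cyclotomic s ℚ ∣ p := by
    rw [cyclotomic_eq_minpoly_rat hζ hs]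
    exact minpoly.dvd ℚ ζ hp
  rw [map_mul, cyclotomic_eq_minpoly_rat hξ hs, minpoly.aeval, zero_mul]

theorem IsPrimitiveRoot.sum_pow_eq_zero_of_sum_pow_eq_zero {K : Type*} [Field K] [CharZero K]
    {ζ ξ : K} {s : ℕ} (hs : 0 < s) (hζ : IsPrimitiveRoot ζ s) (hξ : IsPrimitiveRoot ξ s)
    {A : Finset ℕ} (h : ∑ a ∈ A, ζ ^ a = 0) : ∑ a ∈ A, ξ ^ a = 0 := by
  simpa using hζ.aeval_eq_zero_of_aeval_eq_zero hs hξ (p := ∑ a ∈ A, X ^ a) (by simpa using h)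

lemma Nat.div_gcd_eq_one_iff {m a : ℕ} (hm : 0 < m) : m / m.gcd a = 1 ↔ m ∣ a := by
  rw [Nat.div_eq_iff_eq_mul_left (Nat.gcd_pos_of_pos_left a hm) (m.gcd_dvd_left a), one_mul,
    eq_comm, Nat.gcd_eq_left_iff_dvd]

lemma mem_primSet {m s : ℕ} {X : Finset ℕ} :
    s ∈ primSet m X ↔ ∃ x ∈ X, ∃ y ∈ X, m / m.gcd ((x : ℤ) - y).natAbs = s := by
  simp [primSet, diffSet, and_assoc]

lemma primSet_nonempty_iff {m : ℕ} {X : Finset ℕ} : (primSet m X).Nonempty ↔ X.Nonempty := by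
  simp [primSet, diffSet]

lemma isHadamardSub_iff {m : ℕ} {J K : Finset ℕ} :
    IsHadamardSub m J K ↔ ∀ j₁ ∈ J, ∀ j₂ ∈ J, j₁ ≠ j₂ →
      ∑ k ∈ K, (exp (2 * Real.pi * I / m) ^ ((j₁ : ℤ) - j₂)) ^ k = 0 := by
  have h (j₁ j₂ k : ℕ) : exp (2 * Real.pi * I * ((j₁ : ℂ) - j₂) * k / m) =
      (exp (2 * Real.pi * I / m) ^ ((j₁ : ℤ) - j₂)) ^ k := by
    rw [← exp_int_mul, ← Complex.exp_nat_mul]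
    congr 1
    push_cast
    ring
  simp only [IsHadamardSub, h]

lemma IsHadamardSub.sum_pow_eq_zero {m s : ℕ} (hm : 0 < m) {J K : Finset ℕ}
    (hH : IsHadamardSub m J K) (hs : s ∈ primSet m J) (hs1 : s ≠ 1) {ξ : ℂ}
    (hξ : IsPrimitiveRoot ξ s) : ∑ k ∈ K, ξ ^ k = 0 := by
  obtain ⟨x, hx, y, hy, rfl⟩ := mem_primSet.1 hs
  have hxy : x ≠ y := by
    rintro rfl
    simp [Nat.div_self hm] at hs1
  have hζ := (isPrimitiveRoot_exp m hm.ne').zpow_div_gcd hm.ne' ((x : ℤ) - y)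
  exact hζ.sum_pow_eq_zero_of_sum_pow_eq_zero
    (Nat.div_pos (Nat.gcd_le_left _ hm) (Nat.gcd_pos_of_pos_left _ hm)) hξ
    (isHadamardSub_iff.1 hH x hx y hy hxy)

lemma IsHadamardSub.of_primSet_subset {m m' : ℕ} (hm : 0 < m) (hm' : 0 < m')
    {J J' K' : Finset ℕ} (hJ : J ⊆ range m) (hH' : IsHadamardSub m' J' K')
    (hP : primSet m J ⊆ primSet m' J') : IsHadamardSub m J K' := by
  rw [isHadamardSub_iff]
  intro j₁ hj₁ j₂ hj₂ hne
  set d : ℤ := (j₁ : ℤ) - j₂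
  have hd : 0 < d.natAbs := by omega
  have hdm : d.natAbs < m := by
    have := mem_range.1 (hJ hj₁)
    have := mem_range.1 (hJ hj₂)
    omega
  refine hH'.sum_pow_eq_zero hm' (hP (mem_primSet.2 ⟨j₁, hj₁, j₂, hj₂, rfl⟩)) ?_
    ((isPrimitiveRoot_exp m hm.ne').zpow_div_gcd hm.ne' d)
  rw [Ne, Nat.div_gcd_eq_one_iff hm]
  exact fun h => (Nat.le_of_dvd hd h).not_gt hdm

lemma IsHadamardSub.card_le {m : ℕ} {J K : Finset ℕ} (hH : IsHadamardSub m J K)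
    (hK : K.Nonempty) : J.card ≤ K.card := by
  let row (j : J) : EuclideanSpace ℂ K :=
    WithLp.toLp 2 fun k => exp (2 * Real.pi * I * (j : ℕ) * (k : ℕ) / m)
  have hinner (i j : J) : inner ℂ (row i) (row j) =
      ∑ k ∈ K, exp (2 * Real.pi * I * ((j : ℕ) - (i : ℕ) : ℂ) * k / m) := by
    rw [PiLp.inner_apply, ← Finset.sum_coe_sort K]
    refine Finset.sum_congr rfl fun k _ => ?_
    simp only [row, RCLike.inner_apply, ← exp_conj, ← Complex.exp_add]
    congr 1
    simp only [map_div₀, map_mul, conj_I, conj_ofReal, map_natCast, map_ofNat]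
    ring
  have hli : LinearIndependent ℂ row := by
    refine linearIndependent_of_ne_zero_of_inner_eq_zero (fun j h => ?_) fun i j hij => ?_
    · obtain ⟨k, hk⟩ := hK
      simpa [row] using congrArg (fun v : EuclideanSpace ℂ K => v ⟨k, hk⟩) h
    · dsimp only
      rw [hinner]
      exact hH _ j.2 _ i.2 fun h => hij (Subtype.ext h).symm
  simpa using hli.fintype_card_le_finrank

theorem primSet_ne_of_size_ne'_general (m m' n n' : ℕ) (hm : 0 < m) (hm' : 0 < m')
    (J K J' K' : Finset ℕ)
    (hJ : J ⊆ Finset.range m)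
    (hJ' : J' ⊆ Finset.range m')
    (hJn : J.card = n) (hKn : K.card = n) (hJn' : J'.card = n') (hKn' : K'.card = n')
    (hH : IsHadamardSub m J K) (hH' : IsHadamardSub m' J' K') (hnn : n ≠ n') :
    primSet m J ≠ primSet m' J' := by
  intro hP
  have hJJ' : J.Nonempty ↔ J'.Nonempty := by
    rw [← primSet_nonempty_iff (m := m), hP, primSet_nonempty_iff]
  obtain hJe | hJne := J.eq_empty_or_nonempty
  · have hJ'e : J' = ∅ := not_nonempty_iff_eq_empty.1 (by simp [← hJJ', hJe])
    simp_all
  have hJ'ne := hJJ'.1 hJne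
  have hK : K.Nonempty := by rw [← card_pos, hKn, ← hJn]; exact hJne.card_pos
  have hK' : K'.Nonempty := by rw [← card_pos, hKn', ← hJn']; exact hJ'ne.card_pos
  have hnn' : n ≤ n' := hJn ▸ hKn' ▸ (hH'.of_primSet_subset hm hm' hJ hP.le).card_le hK'
  have hn'n : n' ≤ n := hJn' ▸ hKn ▸ (hH.of_primSet_subset hm' hm hJ' hP.ge).card_le hK
  omega

theorem primSet_ne_of_size_ne' (m m' n n' : ℕ) (hm : 0 < m) (hm' : 0 < m')
    (J K J' K' : Finset ℕ)
    (hJ : J ⊆ Finset.range m) (hK : K ⊆ Finset.range m)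
    (hJ' : J' ⊆ Finset.range m') (hK' : K' ⊆ Finset.range m')
    (hJn : J.card = n) (hKn : K.card = n) (hJn' : J'.card = n') (hKn' : K'.card = n')
    (hH : IsHadamardSub m J K) (hH' : IsHadamardSub m' J' K') (hnn : n ≠ n') :
    primSet m J ≠ primSet m' J' :=
  primSet_ne_of_size_ne'_general m m' n n' hm hm' J K J' K' hJ hJ' hJn hKn hJn' hKn' hH hH' hnn
end

section
/- Let q be a positive integer and let J, K ⊆ {0,1,…,2^q−1} with |J| = |K| = 2. Then H_{J,K,2^q} is a Hadamard submatrix of the Fourier matrix F_{2^q} if and only if there exist α, β ∈ ℕ₀ with α + β = q − 1 such that P_{2^q}(J) = {1, 2^{q−α}} and P_{2^q}(K) = {1, 2^{q−β}}. -/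
open Finset

/-! For `J = {a, b}` and `K = {c, e}` the only orthogonality relation (up to the sign of `d`) is
`e^{2πi d c / m} + e^{2πi d e / m} = 0` with `d = a - b`, which holds iff `2 d (c - e) / m` is an
odd integer; for `m = 2^q` this says `v₂(a - b) + v₂(c - e) = q - 1`. On the other side
`P_m({a, b}) = {1, m / gcd(m, |a - b|)} = {1, 2^(q - v₂(a - b))}`, so the exponents `α`, `β` are
forced to be the 2-adic valuations of the two differences. -/

open Complex in
theorem Complex.exp_add_exp_eq_zero_iff (x y : ℂ) :
    exp x + exp y = 0 ↔ ∃ u : ℤ, Odd u ∧ x - y = u * Real.pi * I := by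
  have hxy : exp (x - y - Real.pi * I) = -exp x / exp y := by
    rw [exp_sub, exp_sub, exp_pi_mul_I, div_div, mul_neg_one, div_neg, neg_div]
  rw [← eq_neg_iff_add_eq_zero, ← neg_eq_iff_eq_neg, ← div_eq_one_iff_eq (exp_ne_zero y),
    ← hxy, exp_eq_one_iff]
  constructor
  · rintro ⟨n, hn⟩
    exact ⟨2 * n + 1, odd_two_mul_add_one n, by push_cast; linear_combination hn⟩
  · rintro ⟨_, ⟨n, rfl⟩, hu⟩
    exact ⟨n, by push_cast at hu; linear_combination hu⟩

open Complex in
theorem sum_pair_fourier_eq_zero_iff {m c e : ℕ} (hm : m ≠ 0) (hce : c ≠ e) (d : ℤ) :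
    ∑ k ∈ {c, e}, exp (2 * Real.pi * I * d * k / m) = 0 ↔
      ∃ u : ℤ, Odd u ∧ 2 * d * ((c : ℤ) - e) = u * m := by
  rw [sum_pair hce, exp_add_exp_eq_zero_iff]
  refine exists_congr fun u => and_congr_right fun _ => ?_
  have hπIm : (Real.pi * I / m : ℂ) ≠ 0 := by simp [Real.pi_ne_zero, hm]
  rw [← (Int.cast_injective (α := ℂ)).eq_iff, ← mul_right_inj' hπIm]
  push_cast
  constructor <;> intro h <;> field_simp at h ⊢ <;> linear_combination h

theorem isHadamardSub_pair_iff {m a b c e : ℕ} (hm : m ≠ 0) (hab : a ≠ b) (hce : c ≠ e) :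
    IsHadamardSub m {a, b} {c, e} ↔
      ∃ u : ℤ, Odd u ∧ 2 * ((a : ℤ) - b) * ((c : ℤ) - e) = u * m := by
  have hsum (j₁ j₂ : ℕ) := sum_pair_fourier_eq_zero_iff hm hce ((j₁ : ℤ) - j₂)
  push_cast at hsum
  constructor
  · intro h
    exact (hsum a b).1 (h a (by simp) b (by simp) hab)
  · rintro ⟨u, hu, h⟩ j₁ hj₁ j₂ hj₂ hne
    simp only [mem_insert, mem_singleton] at hj₁ hj₂
    rcases hj₁ with rfl | rfl <;> rcases hj₂ with rfl | rfl
    · exact absurd rfl hne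
    · exact (hsum _ _).2 ⟨u, hu, h⟩
    · exact (hsum _ _).2 ⟨-u, hu.neg, by linear_combination -h⟩
    · exact absurd rfl hne

theorem padicValInt_eq_iff {p : ℕ} [Fact p.Prime] {x : ℤ} (hx : x ≠ 0) (k : ℕ) :
    padicValInt p x = k ↔ ∃ u : ℤ, ¬ (p : ℤ) ∣ u ∧ x = u * p ^ k := by
  constructor
  · intro hv
    obtain ⟨u, hu⟩ := padicValInt_dvd (p := p) x
    refine ⟨u, fun ⟨w, hw⟩ => ?_, by rw [hu, hv, mul_comm]⟩
    have := (padicValInt_dvd_iff (padicValInt p x + 1) x).1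
      ⟨w, by rw [pow_succ, mul_assoc, ← hw, ← hu]⟩
    omega
  · rintro ⟨u, hu, rfl⟩
    have hu0 : u ≠ 0 := by rintro rfl; exact hu (dvd_zero _)
    rw [padicValInt.mul hu0 (pow_ne_zero _ (by exact_mod_cast (Fact.out : p.Prime).ne_zero)),
      padicValInt.eq_zero_of_not_dvd hu, ← Nat.cast_pow, padicValInt.of_nat,
      padicValNat.prime_pow, zero_add]

theorem padicValInt_two_eq_iff {x : ℤ} (hx : x ≠ 0) (k : ℕ) :
    padicValInt 2 x = k ↔ ∃ u : ℤ, Odd u ∧ x = u * 2 ^ k := by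
  simp only [padicValInt_eq_iff hx, ← even_iff_two_dvd, Int.not_even_iff_odd, Nat.cast_ofNat]

theorem isHadamardSub_two_pow_pair_iff {q a b c e : ℕ} (hab : a ≠ b) (hce : c ≠ e) :
    IsHadamardSub (2 ^ q) {a, b} {c, e} ↔
      padicValInt 2 ((a : ℤ) - b) + padicValInt 2 ((c : ℤ) - e) + 1 = q := by
  have hd : (a : ℤ) - b ≠ 0 := by omega
  have hf : (c : ℤ) - e ≠ 0 := by omega
  have h2 : padicValInt 2 2 = 1 := padicValInt.self one_lt_two
  rw [isHadamardSub_pair_iff (by positivity) hab hce, Nat.cast_pow, Nat.cast_ofNat,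
    ← padicValInt_two_eq_iff (by positivity), padicValInt.mul (by positivity) hf,
    padicValInt.mul two_ne_zero hd, h2]
  omega

theorem Nat.gcd_prime_pow_eq_pow_padicValNat {p q t : ℕ} (hp : p.Prime) (ht : t ≠ 0)
    (hv : padicValNat p t ≤ q) :
    Nat.gcd (p ^ q) t = p ^ padicValNat p t := by
  have := Fact.mk hp
  obtain ⟨j, -, hg⟩ := (Nat.dvd_prime_pow hp).1 (Nat.gcd_dvd_left (p ^ q) t)
  rw [hg]
  refine congrArg (p ^ ·) (le_antisymm ?_ ?_)
  · exact (padicValNat_dvd_iff_le ht).1 (hg ▸ Nat.gcd_dvd_right _ _)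
  · rw [← Nat.pow_dvd_pow_iff_le_right hp.one_lt, ← hg]
    exact Nat.dvd_gcd (pow_dvd_pow p hv) pow_padicValNat_dvd

theorem diffSet_pair (a b : ℕ) : diffSet {a, b} = {0, (a : ℤ) - b, (b : ℤ) - a} := by
  ext x
  simp only [diffSet, mem_image, mem_product, mem_insert, mem_singleton, Prod.exists]
  constructor
  · rintro ⟨i, j, ⟨rfl | rfl, rfl | rfl⟩, rfl⟩ <;> simp
  · rintro (rfl | rfl | rfl)
    exacts [⟨a, a, by simp⟩, ⟨a, b, by simp⟩, ⟨b, a, by simp⟩]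

theorem primSet_pair {m : ℕ} (hm : m ≠ 0) (a b : ℕ) :
    primSet m {a, b} = {1, m / Nat.gcd m ((a : ℤ) - b).natAbs} := by
  have hba : ((b : ℤ) - a).natAbs = ((a : ℤ) - b).natAbs := by rw [← Int.natAbs_neg, neg_sub]
  simp [primSet, diffSet_pair, hba, Nat.div_self (Nat.pos_of_ne_zero hm)]

theorem primSet_prime_pow_pair {p q a b : ℕ} (hp : p.Prime) (hab : a ≠ b)
    (hv : padicValInt p ((a : ℤ) - b) ≤ q) :
    primSet (p ^ q) {a, b} = {1, p ^ (q - padicValInt p ((a : ℤ) - b))} := by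
  rw [padicValInt] at hv ⊢
  have ht : ((a : ℤ) - b).natAbs ≠ 0 := by omega
  rw [primSet_pair (pow_ne_zero _ hp.ne_zero), Nat.gcd_prime_pow_eq_pow_padicValNat hp ht hv,
    Nat.pow_div hv hp.pos]

theorem padicValInt_sub_lt {p q a b : ℕ} (hp : 1 < p) (hab : a ≠ b) (ha : a < p ^ q)
    (hb : b < p ^ q) : padicValInt p ((a : ℤ) - b) < q :=
  (Nat.pow_lt_pow_iff_right hp).1 <|
    (Nat.le_of_dvd (by omega) pow_padicValNat_dvd).trans_lt (by omega)

theorem pair_one_pow_sub_eq_iff {p q x y : ℕ} (hp : 1 < p) (hx : x < q) (hy : y < q) :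
    ({1, p ^ (q - x)} : Finset ℕ) = {1, p ^ (q - y)} ↔ x = y := by
  refine ⟨fun h => ?_, fun h => h ▸ rfl⟩
  have hmem : p ^ (q - x) ∈ ({1, p ^ (q - y)} : Finset ℕ) := h ▸ by simp
  rcases mem_insert.1 hmem with h1 | h1
  · exact absurd h1 (Nat.one_lt_pow (by omega) hp).ne'
  · have := Nat.pow_right_injective hp (mem_singleton.1 h1)
    omega

theorem hadamard_two_pow_iff_general (q : ℕ) (J K : Finset ℕ)
    (hJ : J ⊆ Finset.range (2 ^ q)) (hK : K ⊆ Finset.range (2 ^ q))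
    (hJ2 : J.card = 2) (hK2 : K.card = 2) :
    IsHadamardSub (2 ^ q) J K ↔
      ∃ α β : ℕ, α + β = q - 1 ∧
        primSet (2 ^ q) J = {1, 2 ^ (q - α)} ∧ primSet (2 ^ q) K = {1, 2 ^ (q - β)} := by
  obtain ⟨a, b, hab, rfl⟩ := card_eq_two.1 hJ2
  obtain ⟨c, e, hce, rfl⟩ := card_eq_two.1 hK2
  simp only [insert_subset_iff, singleton_subset_iff, mem_range] at hJ hK
  have hvd := padicValInt_sub_lt one_lt_two hab hJ.1 hJ.2
  have hvf := padicValInt_sub_lt one_lt_two hce hK.1 hK.2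
  rw [isHadamardSub_two_pow_pair_iff hab hce, primSet_prime_pow_pair Nat.prime_two hab hvd.le,
    primSet_prime_pow_pair Nat.prime_two hce hvf.le]
  constructor
  · intro h
    exact ⟨_, _, by omega, rfl, rfl⟩
  · rintro ⟨α, β, hαβ, hα, hβ⟩
    rw [pair_one_pow_sub_eq_iff one_lt_two hvd (by omega)] at hα
    rw [pair_one_pow_sub_eq_iff one_lt_two hvf (by omega)] at hβ
    omega

theorem hadamard_two_pow_iff (q : ℕ) (hq : 0 < q) (J K : Finset ℕ)
    (hJ : J ⊆ Finset.range (2 ^ q)) (hK : K ⊆ Finset.range (2 ^ q))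
    (hJ2 : J.card = 2) (hK2 : K.card = 2) :
    IsHadamardSub (2 ^ q) J K ↔
      ∃ α β : ℕ, α + β = q - 1 ∧
        primSet (2 ^ q) J = {1, 2 ^ (q - α)} ∧ primSet (2 ^ q) K = {1, 2 ^ (q - β)} :=
  hadamard_two_pow_iff_general q J K hJ hK hJ2 hK2
end

section
/- Let q be a positive integer. The number of distinct sets P for which there exist J, K ⊆ {0,1,…,2^q−1} with |J| = |K| = 2 such that H_{J,K,2^q} is a Hadamard submatrix of F_{2^q} and P = P_{2^q}(J) is exactly q; indeed this collection of sets is exactly {{1, 2^{q−α}} : α ∈ ℕ₀, 0 ≤ α ≤ q−1}. -/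
open Finset

lemma gcd_pow_two (q n : ℕ) (hn : n ≠ 0) (h : padicValNat 2 n < q) :
    Nat.gcd (2^q) n = 2 ^ padicValNat 2 n := by
  set α := padicValNat 2 n with hα
  have hself : 2 ^ α * (n / 2 ^ α) = n := by
    have := Nat.ordProj_mul_ordCompl_eq_self n 2
    rwa [Nat.factorization_def n Nat.prime_two] at this
  have hodd : ¬ 2 ∣ (n / 2 ^ α) := by
    have := Nat.not_dvd_ordCompl Nat.prime_two hn
    rwa [Nat.factorization_def n Nat.prime_two] at this
  have hcop : Nat.Coprime (2 ^ (q - α)) (n / 2 ^ α) :=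
    Nat.Coprime.pow_left _ ((Nat.Prime.coprime_iff_not_dvd Nat.prime_two).mpr hodd)
  calc Nat.gcd (2^q) n = Nat.gcd (2^α * 2^(q-α)) (2^α * (n / 2^α)) := by
        rw [← pow_add, Nat.add_sub_cancel' h.le, hself]
    _ = 2^α * Nat.gcd (2^(q-α)) (n / 2^α) := Nat.gcd_mul_left _ _ _
    _ = 2^α := by rw [hcop]; ring

lemma val_lt_of_lt (q a b : ℕ) (ha : a < 2^q) (hb : b < 2^q) (hab : a ≠ b) :
    padicValNat 2 ((a:ℤ) - b).natAbs < q := by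
  set d : ℤ := (a:ℤ) - b with hd
  have hd0 : d.natAbs ≠ 0 := by simp [hd]; omega
  by_contra hc
  push_neg at hc
  have h1 : 2 ^ padicValNat 2 d.natAbs ∣ d.natAbs := pow_padicValNat_dvd
  have h2 : 2 ^ q ≤ 2 ^ padicValNat 2 d.natAbs := Nat.pow_le_pow_right (by norm_num) hc
  have h3 : d.natAbs < 2 ^ q := by rw [hd]; omega
  have := Nat.le_of_dvd (Nat.pos_of_ne_zero hd0) h1
  omega

lemma diff_pair (a b : ℕ) : diffSet {a, b} = {0, (a:ℤ) - b, (b:ℤ) - a} := by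
  ext x
  simp only [diffSet, Finset.mem_image, Finset.mem_product, Finset.mem_insert,
    Finset.mem_singleton, Prod.exists]
  constructor
  · rintro ⟨u, v, ⟨hu | hu, hv | hv⟩, rfl⟩ <;> subst hu <;> subst hv <;> omega
  · rintro (rfl | rfl | rfl)
    exacts [⟨a, a, ⟨Or.inl rfl, Or.inl rfl⟩, by ring⟩,
      ⟨a, b, ⟨Or.inl rfl, Or.inr rfl⟩, rfl⟩, ⟨b, a, ⟨Or.inr rfl, Or.inl rfl⟩, rfl⟩]

lemma prim_pair (q a b : ℕ) (ha : a < 2^q) (hb : b < 2^q) (hab : a ≠ b) :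
    primSet (2^q) {a, b} = {1, 2 ^ (q - padicValNat 2 ((a:ℤ)-b).natAbs)} := by
  set d : ℤ := (a:ℤ) - b with hd
  have hd0 : d.natAbs ≠ 0 := by simp [hd]; omega
  set α := padicValNat 2 d.natAbs with hα
  have hαlt : α < q := val_lt_of_lt q a b ha hb hab
  have hnegabs : (-d).natAbs = d.natAbs := by simp
  rw [primSet, diff_pair, show (b:ℤ) - a = -d by rw [hd]; ring]
  rw [Finset.image_insert, Finset.image_insert, Finset.image_singleton]
  rw [hnegabs]
  have h0 : 2^q / Nat.gcd (2^q) (0:ℤ).natAbs = 1 := by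
    simp [Nat.div_self (Nat.pos_of_ne_zero (pow_ne_zero q (two_ne_zero)))]
  have h1 : 2^q / Nat.gcd (2^q) d.natAbs = 2 ^ (q - α) := by
    rw [gcd_pow_two _ _ hd0 hαlt, Nat.pow_div hαlt.le (by norm_num)]
  rw [h0, h1]; simp

lemma had_pair (q α : ℕ) (hq : 0 < q) (hα : α ≤ q - 1) :
    IsHadamardSub (2^q) {0, 2^α} {0, 2^(q-1-α)} := by
  have h2q : (2:ℂ)^q ≠ 0 := pow_ne_zero _ two_ne_zero
  have hclean : 2 * (Real.pi:ℂ) * Complex.I * 2^α * 2^(q-1-α) / 2^q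
      = Real.pi * Complex.I := by
    have hq2 : (2:ℂ)^q = 2^α * 2^(q-1-α) * 2 := by
      rw [← pow_add, show α + (q-1-α) = q-1 by omega, ← pow_succ, show q-1+1 = q by omega]
    rw [hq2]
    have h1 : (2:ℂ)^α ≠ 0 := pow_ne_zero _ two_ne_zero
    have h2 : (2:ℂ)^(q-1-α) ≠ 0 := pow_ne_zero _ two_ne_zero
    field_simp
  have hK : (0:ℕ) ≠ 2^(q-1-α) := (pow_pos two_pos _).ne
  intro j₁ h₁ j₂ h₂ hne
  rw [Finset.sum_pair hK]
  simp only [Finset.mem_insert, Finset.mem_singleton] at h₁ h₂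
  rcases h₁ with rfl | rfl <;> rcases h₂ with rfl | rfl
  · exact absurd rfl hne
  · have h0 : 2 * (Real.pi:ℂ) * Complex.I * (((0:ℕ):ℂ) - ((2^α : ℕ):ℂ)) * ((0:ℕ):ℂ)
        / ((2^q : ℕ):ℂ) = 0 := by push_cast; ring
    have h1 : 2 * (Real.pi:ℂ) * Complex.I * (((0:ℕ):ℂ) - ((2^α : ℕ):ℂ)) * ((2^(q-1-α) : ℕ):ℂ)
        / ((2^q : ℕ):ℂ) = -(Real.pi * Complex.I) := by
      push_cast
      linear_combination -hclean
    rw [h0, h1, Complex.exp_zero, Complex.exp_neg, Complex.exp_pi_mul_I]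
    norm_num
  · have h0 : 2 * (Real.pi:ℂ) * Complex.I * (((2^α : ℕ):ℂ) - ((0:ℕ):ℂ)) * ((0:ℕ):ℂ)
        / ((2^q : ℕ):ℂ) = 0 := by push_cast; ring
    have h1 : 2 * (Real.pi:ℂ) * Complex.I * (((2^α : ℕ):ℂ) - ((0:ℕ):ℂ)) * ((2^(q-1-α) : ℕ):ℂ)
        / ((2^q : ℕ):ℂ) = Real.pi * Complex.I := by
      push_cast
      linear_combination hclean
    rw [h0, h1, Complex.exp_zero, Complex.exp_pi_mul_I]
    norm_num
  · exact absurd rfl hne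

theorem vertices_two_pow (q : ℕ) (hq : 0 < q) :
    {P : Finset ℕ | ∃ J K : Finset ℕ, J ⊆ Finset.range (2 ^ q) ∧ K ⊆ Finset.range (2 ^ q) ∧
        J.card = 2 ∧ K.card = 2 ∧ IsHadamardSub (2 ^ q) J K ∧ P = primSet (2 ^ q) J} =
      {P : Finset ℕ | ∃ α : ℕ, α ≤ q - 1 ∧ P = {1, 2 ^ (q - α)}} ∧
    {P : Finset ℕ | ∃ J K : Finset ℕ, J ⊆ Finset.range (2 ^ q) ∧ K ⊆ Finset.range (2 ^ q) ∧
        J.card = 2 ∧ K.card = 2 ∧ IsHadamardSub (2 ^ q) J K ∧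
        P = primSet (2 ^ q) J}.ncard = q := by
  have hST : {P : Finset ℕ | ∃ J K : Finset ℕ, J ⊆ Finset.range (2 ^ q) ∧
      K ⊆ Finset.range (2 ^ q) ∧ J.card = 2 ∧ K.card = 2 ∧ IsHadamardSub (2 ^ q) J K ∧
      P = primSet (2 ^ q) J} =
      {P : Finset ℕ | ∃ α : ℕ, α ≤ q - 1 ∧ P = {1, 2 ^ (q - α)}} := by
    ext P
    simp only [Set.mem_setOf_eq]
    constructor
    · rintro ⟨J, K, hJ, hK, hJ2, hK2, -, rfl⟩
      obtain ⟨a, b, hab, rfl⟩ := Finset.card_eq_two.mp hJ2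
      have ha : a < 2^q := Finset.mem_range.mp (hJ (by simp))
      have hb : b < 2^q := Finset.mem_range.mp (hJ (by simp))
      refine ⟨padicValNat 2 ((a:ℤ) - b).natAbs, ?_, prim_pair q a b ha hb hab⟩
      have := val_lt_of_lt q a b ha hb hab
      omega
    · rintro ⟨α, hα, rfl⟩
      have hαq : α < q := by omega
      have hpow : (2:ℕ)^α < 2^q := Nat.pow_lt_pow_right one_lt_two hαq
      have hpow2 : (2:ℕ)^(q-1-α) < 2^q := Nat.pow_lt_pow_right one_lt_two (by omega)
      refine ⟨{0, 2^α}, {0, 2^(q-1-α)}, ?_, ?_, ?_, ?_, had_pair q α hq hα, ?_⟩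
      · simp only [Finset.insert_subset_iff, Finset.singleton_subset_iff, Finset.mem_range]
        exact ⟨pow_pos two_pos q, hpow⟩
      · simp only [Finset.insert_subset_iff, Finset.singleton_subset_iff, Finset.mem_range]
        exact ⟨pow_pos two_pos q, hpow2⟩
      · exact Finset.card_pair (pow_pos two_pos α).ne
      · exact Finset.card_pair (pow_pos two_pos (q-1-α)).ne
      · rw [prim_pair q 0 (2^α) (pow_pos two_pos q) hpow (pow_pos two_pos α).ne]
        congr 2
        rw [show (((0:ℕ):ℤ) - ((2^α : ℕ):ℤ)).natAbs = 2^α by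
          rw [show ((0:ℕ):ℤ) - ((2^α : ℕ):ℤ) = -((2:ℤ)^α) by push_cast; ring,
            Int.natAbs_neg]
          simp [Int.natAbs_pow]]
        rw [padicValNat.prime_pow]
  refine ⟨hST, ?_⟩
  rw [hST]
  have hset : {P : Finset ℕ | ∃ α : ℕ, α ≤ q - 1 ∧ P = {1, 2 ^ (q - α)}} =
      ↑((Finset.Iic (q-1)).image fun α => ({1, 2^(q-α)} : Finset ℕ)) := by
    ext P
    simp only [Set.mem_setOf_eq, Finset.coe_image, Set.mem_image, Finset.mem_coe,
      Finset.mem_Iic]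
    constructor
    · rintro ⟨α, h1, h2⟩; exact ⟨α, h1, h2.symm⟩
    · rintro ⟨α, h1, h2⟩; exact ⟨α, h1, h2.symm⟩
  rw [hset, Set.ncard_coe_finset, Finset.card_image_of_injOn, Nat.card_Iic]
  · omega
  · intro α hα β hβ h
    simp only [Finset.mem_coe, Finset.mem_Iic] at hα hβ
    have h' : ({1, 2^(q-α)} : Finset ℕ) = {1, 2^(q-β)} := h
    have hmem : (2:ℕ)^(q-α) ∈ ({1, 2^(q-β)} : Finset ℕ) := by
      rw [← h']; simp
    have h2 : (2:ℕ)^(q-α) ≠ 1 := by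
      have : 1 ≤ q - α := by omega
      have := Nat.pow_le_pow_right (show 0 < 2 by norm_num) this
      omega
    simp only [Finset.mem_insert, Finset.mem_singleton] at hmem
    rcases hmem with hm | hm
    · exact absurd hm h2
    · have := Nat.pow_right_injective (le_refl 2) hm
      omega
end
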